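/- arXiv:1510.01123 — 2 statements merged into one kernel-verified Lean document; each statement's English description precedes it below -/
import Mathlib

section
/- Let γ ∈ (0,1] and define b(x) = -2|x|^γ x and σ(x) = |x|^{1+γ/2}(I₃ - xx*/|x|²) (vanishing at 0). Then for all X, Y ∈ ℝ³, the quantity Δ₂ = (X-Y)·(b(X)-b(Y)) + ‖σ(X)-σ(Y)‖² satisfies Δ₂ ≤ 2(X·Y)(|X|^{γ/2} - |Y|^{γ/2})² ≤ 2(|X| ∧ |Y|)^γ |X-Y|². For γ = 0 one has Δ₂ ≤ 0. -/
noncomputable section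
open Matrix
open scoped Classical

abbrev E3 := EuclideanSpace ℝ (Fin 3)
abbrev M3 := Matrix (Fin 3) (Fin 3) ℝ

def proj3 (x : E3) : M3 :=
  1 - (‖x‖ ^ 2)⁻¹ • Matrix.vecMulVec (fun i => x i) (fun i => x i)

def sigmat (γ : ℝ) (v : E3) : M3 := if v = 0 then 0 else (‖v‖ ^ (1 + γ / 2)) • proj3 v

def bvec (γ : ℝ) (v : E3) : E3 := (-2 * ‖v‖ ^ γ) • v

def frobSq (A : M3) : ℝ := Matrix.trace (A * Aᵀ)

/-- `Δ₂ = (X-Y)·(b(X)-b(Y)) + ‖σ(X)-σ(Y)‖²`. -/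
def Delta2 (γ : ℝ) (X Y : E3) : ℝ :=
  (inner ℝ (X - Y) (bvec γ X - bvec γ Y) : ℝ) + frobSq (sigmat γ X - sigmat γ Y)

/-!
For `x ≠ 0`, `σ(x) = |x|^{1+γ/2} P_x` with `P_x` the orthogonal projection onto `x^⊥`, and
`tr (P_x P_y) = 1 + cos² ∠(x, y)`. Writing `s = X·Y`, `u = |X|^{γ/2}`, `v = |Y|^{γ/2}`, expanding
`Δ₂` gives the exact identity `2 s (u - v)² - Δ₂ = 2 u v (|X||Y| - s)² / (|X||Y|) ≥ 0`, while
`Δ₂ = 0` as soon as one of the vectors vanishes. For `γ = 0` the bound is `0` since `u = v = 1`.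

For the second inequality only `s > 0` matters. Then `s ≤ |X||Y| = p q` with `q ≤ p`, and squaring
`p^{1-γ/2} (p^{γ/2} - q^{γ/2}) ≤ p - q` and using `q^{1-γ} ≤ p^{1-γ}` gives
`p q (p^{γ/2} - q^{γ/2})² ≤ q^γ (p - q)² ≤ q^γ |X - Y|²`.
-/

open RealInnerProductSpace

lemma EuclideanSpace.dotProduct_eq_inner {ι : Type*} [Fintype ι] (x y : EuclideanSpace ℝ ι) :
    (fun i => x i) ⬝ᵥ (fun i => y i) = ⟪x, y⟫ := by
  simp [PiLp.inner_apply, dotProduct, mul_comm]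

lemma proj3_transpose (x : E3) : (proj3 x)ᵀ = proj3 x := by
  simp [proj3]

lemma trace_proj3_mul {x y : E3} (hx : x ≠ 0) (hy : y ≠ 0) :
    trace (proj3 x * proj3 y) = 1 + ⟪x, y⟫ ^ 2 / (‖x‖ ^ 2 * ‖y‖ ^ 2) := by
  have hx' : ‖x‖ ≠ 0 := norm_ne_zero_iff.mpr hx
  have hy' : ‖y‖ ≠ 0 := norm_ne_zero_iff.mpr hy
  simp only [proj3, sub_mul, mul_sub, one_mul, mul_one, smul_mul, Matrix.mul_smul,
    vecMulVec_mul_vecMulVec, trace_sub, trace_smul, trace_one, trace_vecMulVec,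
    dotProduct_smul, EuclideanSpace.dotProduct_eq_inner, real_inner_self_eq_norm_sq,
    smul_eq_mul, Fintype.card_fin]
  field_simp
  ring

lemma trace_proj3_mul_self {x : E3} (hx : x ≠ 0) : trace (proj3 x * proj3 x) = 2 := by
  have := norm_ne_zero_iff.mpr hx
  rw [trace_proj3_mul hx hx, real_inner_self_eq_norm_sq]
  field_simp
  norm_num

lemma frobSq_smul_proj3_sub_smul_proj3 (c d : ℝ) {x y : E3} (hx : x ≠ 0) (hy : y ≠ 0) :
    frobSq (c • proj3 x - d • proj3 y) =
      2 * c ^ 2 + 2 * d ^ 2 - 2 * c * d * (1 + ⟪x, y⟫ ^ 2 / (‖x‖ ^ 2 * ‖y‖ ^ 2)) := by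
  simp only [frobSq, transpose_sub, transpose_smul, proj3_transpose, sub_mul, mul_sub,
    smul_mul, Matrix.mul_smul, smul_smul, trace_sub, trace_smul, smul_eq_mul]
  rw [trace_proj3_mul_self hx, trace_proj3_mul_self hy, trace_mul_comm (proj3 y),
    trace_proj3_mul hx hy]
  ring

lemma frobSq_neg (A : M3) : frobSq (-A) = frobSq A := by
  simp [frobSq]

lemma Real.rpow_eq_sq_rpow_half {a : ℝ} (ha : 0 ≤ a) (γ : ℝ) : a ^ γ = (a ^ (γ / 2)) ^ 2 := by
  rw [← Real.rpow_mul_natCast ha]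
  norm_num

lemma Real.rpow_one_add_half {a : ℝ} (ha : 0 < a) (γ : ℝ) : a ^ (1 + γ / 2) = a * a ^ (γ / 2) := by
  rw [Real.rpow_add ha, Real.rpow_one]

lemma inner_sub_bvec_sub (γ : ℝ) (X Y : E3) :
    ⟪X - Y, bvec γ X - bvec γ Y⟫ =
      -2 * ‖X‖ ^ γ * ‖X‖ ^ 2 - 2 * ‖Y‖ ^ γ * ‖Y‖ ^ 2 + 2 * ⟪X, Y⟫ * (‖X‖ ^ γ + ‖Y‖ ^ γ) := by
  simp only [bvec, inner_sub_left, inner_sub_right, real_inner_smul_right,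
    real_inner_self_eq_norm_sq, real_inner_comm X Y]
  ring

lemma frobSq_sigmat (γ : ℝ) (Y : E3) : frobSq (sigmat γ Y) = 2 * ‖Y‖ ^ γ * ‖Y‖ ^ 2 := by
  by_cases hY : Y = 0
  · simp [hY, sigmat, frobSq]
  have hb : 0 < ‖Y‖ := norm_pos_iff.mpr hY
  rw [sigmat, if_neg hY, frobSq, transpose_smul, proj3_transpose, smul_mul, Matrix.mul_smul,
    smul_smul, trace_smul, trace_proj3_mul_self hY, smul_eq_mul, Real.rpow_one_add_half hb,
    Real.rpow_eq_sq_rpow_half hb.le γ]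
  ring

lemma Delta2_comm (γ : ℝ) (X Y : E3) : Delta2 γ X Y = Delta2 γ Y X := by
  rw [Delta2, Delta2, ← neg_sub Y X, ← neg_sub (bvec γ Y), inner_neg_neg, ← neg_sub (sigmat γ Y),
    frobSq_neg]

lemma Delta2_zero_left (γ : ℝ) (Y : E3) : Delta2 γ 0 Y = 0 := by
  have hσ : sigmat γ 0 = 0 := if_pos rfl
  rw [Delta2, inner_sub_bvec_sub, hσ, zero_sub, frobSq_neg, frobSq_sigmat]
  simp

lemma Delta2_eq_of_ne_zero (γ : ℝ) {X Y : E3} (hX : X ≠ 0) (hY : Y ≠ 0) :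
    Delta2 γ X Y =
      2 * ⟪X, Y⟫ * (‖X‖ ^ (γ / 2) - ‖Y‖ ^ (γ / 2)) ^ 2
        - 2 * ‖X‖ ^ (γ / 2) * ‖Y‖ ^ (γ / 2) * (‖X‖ * ‖Y‖ - ⟪X, Y⟫) ^ 2 / (‖X‖ * ‖Y‖) := by
  have ha : 0 < ‖X‖ := norm_pos_iff.mpr hX
  have hb : 0 < ‖Y‖ := norm_pos_iff.mpr hY
  rw [Delta2, inner_sub_bvec_sub, sigmat, if_neg hX, sigmat, if_neg hY,
    frobSq_smul_proj3_sub_smul_proj3 _ _ hX hY, Real.rpow_one_add_half ha,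
    Real.rpow_one_add_half hb, Real.rpow_eq_sq_rpow_half ha.le, Real.rpow_eq_sq_rpow_half hb.le]
  field_simp
  ring

lemma Delta2_le (γ : ℝ) (X Y : E3) :
    Delta2 γ X Y ≤ 2 * ⟪X, Y⟫ * (‖X‖ ^ (γ / 2) - ‖Y‖ ^ (γ / 2)) ^ 2 := by
  rcases eq_or_ne X 0 with rfl | hX
  · simp [Delta2_zero_left]
  rcases eq_or_ne Y 0 with rfl | hY
  · simp [Delta2_comm γ X, Delta2_zero_left]
  rw [Delta2_eq_of_ne_zero γ hX hY, sub_le_self_iff]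
  positivity

lemma Real.rpow_one_sub_mul_rpow_sub_rpow_le {p q r : ℝ} (hq : 0 < q) (hqp : q ≤ p)
    (hr : r ≤ 1) : p ^ (1 - r) * (p ^ r - q ^ r) ≤ p - q := by
  have hp : 0 < p := hq.trans_le hqp
  have hpp : p ^ (1 - r) * p ^ r = p := by rw [← Real.rpow_add hp]; norm_num
  have hqq : q ^ (1 - r) * q ^ r = q := by rw [← Real.rpow_add hq]; norm_num
  have hle : q ^ (1 - r) * q ^ r ≤ p ^ (1 - r) * q ^ r := by gcongr
  rw [mul_sub, hpp]
  linarith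

lemma Real.mul_mul_rpow_half_sub_sq_le {p q γ : ℝ} (hq : 0 < q) (hqp : q ≤ p)
    (hγ₀ : 0 ≤ γ) (hγ₁ : γ ≤ 1) :
    p * q * (p ^ (γ / 2) - q ^ (γ / 2)) ^ 2 ≤ q ^ γ * (p - q) ^ 2 := by
  have hp : 0 < p := hq.trans_le hqp
  have hqq : q ^ γ * q ^ (1 - γ) = q := by rw [← Real.rpow_add hq]; norm_num
  have hpp : p ^ (1 - γ) * p = (p ^ (1 - γ / 2)) ^ 2 := by
    rw [← Real.rpow_add_one hp.ne', Real.rpow_eq_sq_rpow_half hp.le]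
    ring_nf
  have hbase : 0 ≤ p ^ (1 - γ / 2) * (p ^ (γ / 2) - q ^ (γ / 2)) :=
    mul_nonneg (by positivity) (sub_nonneg.mpr (by gcongr))
  calc p * q * (p ^ (γ / 2) - q ^ (γ / 2)) ^ 2
      = q ^ γ * (q ^ (1 - γ) * p) * (p ^ (γ / 2) - q ^ (γ / 2)) ^ 2 := by
        linear_combination (p * (p ^ (γ / 2) - q ^ (γ / 2)) ^ 2) * hqq.symm
    _ ≤ q ^ γ * (p ^ (1 - γ) * p) * (p ^ (γ / 2) - q ^ (γ / 2)) ^ 2 := by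
        gcongr
    _ = q ^ γ * (p ^ (1 - γ / 2) * (p ^ (γ / 2) - q ^ (γ / 2))) ^ 2 := by
        rw [hpp]; ring
    _ ≤ q ^ γ * (p - q) ^ 2 := by
        gcongr
        exact Real.rpow_one_sub_mul_rpow_sub_rpow_le hq hqp (by linarith)

lemma Real.mul_mul_rpow_half_sub_sq_le_min {a b γ : ℝ} (ha : 0 < a) (hb : 0 < b)
    (hγ₀ : 0 ≤ γ) (hγ₁ : γ ≤ 1) :
    a * b * (a ^ (γ / 2) - b ^ (γ / 2)) ^ 2 ≤ min a b ^ γ * (a - b) ^ 2 := by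
  rcases le_total b a with hba | hab
  · rw [min_eq_right hba]
    exact Real.mul_mul_rpow_half_sub_sq_le hb hba hγ₀ hγ₁
  · rw [min_eq_left hab, mul_comm a b, ← neg_sq (a ^ _ - _), ← neg_sq (a - b), neg_sub, neg_sub]
    exact Real.mul_mul_rpow_half_sub_sq_le ha hab hγ₀ hγ₁

lemma inner_mul_rpow_half_sub_sq_le {F : Type*} [NormedAddCommGroup F] [InnerProductSpace ℝ F]
    {γ : ℝ} (hγ₀ : 0 ≤ γ) (hγ₁ : γ ≤ 1) (X Y : F) :
    2 * ⟪X, Y⟫ * (‖X‖ ^ (γ / 2) - ‖Y‖ ^ (γ / 2)) ^ 2 ≤ 2 * min ‖X‖ ‖Y‖ ^ γ * ‖X - Y‖ ^ 2 := by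
  rcases le_or_gt ⟪X, Y⟫ 0 with hs | hs
  · have : 2 * ⟪X, Y⟫ * (‖X‖ ^ (γ / 2) - ‖Y‖ ^ (γ / 2)) ^ 2 ≤ 0 :=
      mul_nonpos_of_nonpos_of_nonneg (by linarith) (sq_nonneg _)
    exact this.trans (by positivity)
  have hXY : 0 < ‖X‖ * ‖Y‖ := hs.trans_le (real_inner_le_norm X Y)
  have ha : 0 < ‖X‖ := pos_of_mul_pos_left hXY (norm_nonneg Y)
  have hb : 0 < ‖Y‖ := pos_of_mul_pos_right hXY (norm_nonneg X)
  have hdist : (‖X‖ - ‖Y‖) ^ 2 ≤ ‖X - Y‖ ^ 2 :=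
    sq_le_sq.mpr ((abs_norm_sub_norm_le X Y).trans (le_abs_self _))
  calc 2 * ⟪X, Y⟫ * (‖X‖ ^ (γ / 2) - ‖Y‖ ^ (γ / 2)) ^ 2
      ≤ 2 * (‖X‖ * ‖Y‖ * (‖X‖ ^ (γ / 2) - ‖Y‖ ^ (γ / 2)) ^ 2) := by
        rw [mul_assoc]; gcongr; exact real_inner_le_norm X Y
    _ ≤ 2 * (min ‖X‖ ‖Y‖ ^ γ * (‖X‖ - ‖Y‖) ^ 2) := by
        gcongr 2 * ?_; exact Real.mul_mul_rpow_half_sub_sq_le_min ha hb hγ₀ hγ₁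
    _ ≤ 2 * min ‖X‖ ‖Y‖ ^ γ * ‖X - Y‖ ^ 2 := by
        rw [← mul_assoc]; gcongr

theorem Delta2_bound (γ : ℝ) (X Y : E3) :
    (γ ∈ Set.Ioc (0:ℝ) 1 →
      Delta2 γ X Y ≤ 2 * (inner ℝ X Y : ℝ) * (‖X‖ ^ (γ / 2) - ‖Y‖ ^ (γ / 2)) ^ 2 ∧
      2 * (inner ℝ X Y : ℝ) * (‖X‖ ^ (γ / 2) - ‖Y‖ ^ (γ / 2)) ^ 2
        ≤ 2 * (min ‖X‖ ‖Y‖) ^ γ * ‖X - Y‖ ^ 2) ∧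
    (γ = 0 → Delta2 γ X Y ≤ 0) := by
  refine ⟨fun hγ => ⟨Delta2_le γ X Y, inner_mul_rpow_half_sub_sq_le hγ.1.le hγ.2 X Y⟩, ?_⟩
  rintro rfl
  simpa using Delta2_le 0 X Y
end
end

section
/- With the setting of the optimal Gaussian coupling lemma but without assuming Σ₁, Σ₂ invertible, for ε ∈ (0,1) set U_ε(Σ₁,Σ₂) = U(Σ₁+εI₃, Σ₂+εI₃). Then there is a universal constant C such that ‖Σ₁^{1/2} - Σ₂^{1/2} U_ε(Σ₁,Σ₂)‖² ≤ C√ε (1 + ‖Σ₁+Σ₂‖^{1/2}) + ∫_F ‖σ₁(x)-σ₂(x)‖² m(dx). -/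
noncomputable section
open Matrix MeasureTheory

def frobNorm (A : M3) : ℝ := Real.sqrt (frobSq A)

section
open scoped ComplexOrder

/-- The positive semidefinite square root of a positive semidefinite matrix
(the definition `Matrix.PosSemidef.sqrt` of the older Mathlib, since removed). -/
def Matrix.PosSemidef.sqrt {n 𝕜 : Type*} [Fintype n] [RCLike 𝕜] [DecidableEq n]
    {A : Matrix n n 𝕜} (hA : A.PosSemidef) : Matrix n n 𝕜 :=
  hA.1.eigenvectorUnitary.1 * diagonal ((↑) ∘ (√·) ∘ hA.1.eigenvalues) *
  (star hA.1.eigenvectorUnitary : Matrix n n 𝕜)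

end

/-!
Write `a = (Σ₁ + εI)^{1/2}`, `b = (Σ₂ + εI)^{1/2}` and `q = (a (Σ₂ + εI) a)^{1/2}`, so that
`U_ε = b⁻¹ a⁻¹ q`. Then `U_ε U_εᵀ = 1` and `‖a - b U_ε‖² = tr (Σ₁ + εI) + tr (Σ₂ + εI) - 2 tr q`.
The positive definite matrix `T = a⁻¹ q a⁻¹` satisfies `tr (T (Σ₁ + εI)) = tr (T⁻¹ (Σ₂ + εI)) = tr q`,
and integrating the pointwise inequality `tr ((1 - T) X Xᵀ) + tr ((1 - T⁻¹) Y Yᵀ) ≤ ‖X - Y‖²`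
(which is `tr (Mᵀ T M) ≥ 0` for `M = X - T⁻¹ Y`) at `X = σ₁`, `Y = σ₂` gives
`‖a - b U_ε‖² ≤ ∫ ‖σ₁ - σ₂‖² + 6ε`. By functional calculus `‖(Σ + εI)^{1/2} - Σ^{1/2}‖² ≤ 3ε`, so the
triangle inequality (`U_ε` being orthogonal) and `∫ ‖σ₁ - σ₂‖² ≤ 2 tr (Σ₁ + Σ₂) ≤ 4 ‖Σ₁ + Σ₂‖` finish
the proof.
-/

attribute [local instance] Matrix.frobeniusNormedAddCommGroup

namespace Matrix.PosSemidef

open scoped MatrixOrder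

variable {n : Type*} [Fintype n] [DecidableEq n] {A : Matrix n n ℝ} (hA : A.PosSemidef)

theorem sqrt_eq_cfcSqrt : hA.sqrt = CFC.sqrt A := by
  rw [CFC.sqrt_eq_cfc, cfc_nnreal_eq_real _ A, hA.1.cfc_eq]
  simp only [IsHermitian.cfc, Unitary.conjStarAlgAut_apply, Matrix.PosSemidef.sqrt]
  congr 3
  funext i
  simp [Real.coe_sqrt, Real.coe_toNNReal', hA.eigenvalues_nonneg i]

theorem posSemidef_sqrt : hA.sqrt.PosSemidef := by
  rw [hA.sqrt_eq_cfcSqrt]; exact (CFC.sqrt_nonneg A).posSemidef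

theorem sqrt_mul_self : hA.sqrt * hA.sqrt = A := by
  rw [hA.sqrt_eq_cfcSqrt]; exact CFC.sqrt_mul_sqrt_self A hA.nonneg

theorem transpose_sqrt : hA.sqrtᵀ = hA.sqrt := by
  rw [← conjTranspose_eq_transpose_of_trivial]; exact hA.posSemidef_sqrt.1

theorem posDef_sqrt (hA' : A.PosDef) : hA.sqrt.PosDef := by
  refine hA.posSemidef_sqrt.posDef_iff_isUnit.mpr ?_
  have h := hA'.isUnit
  rw [← hA.sqrt_mul_self] at h
  exact isUnit_of_mul_isUnit_left h

end Matrix.PosSemidef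

namespace Matrix

variable {m n : Type*} [Fintype m] [Fintype n]

theorem trace_mul_eq_sum (W : Matrix m n ℝ) (M : Matrix n m ℝ) :
    trace (W * M) = ∑ i, ∑ j, W i j * M j i := by
  simp [trace, mul_apply]

theorem frobenius_norm_sq_eq_trace (X : Matrix m n ℝ) : ‖X‖ ^ 2 = trace (X * Xᵀ) := by
  rw [frobenius_norm_def, ← Real.sqrt_eq_rpow, Real.sq_sqrt (by positivity)]
  simp [trace, mul_apply, sq]

theorem frobenius_norm_sub_sq (X Y : Matrix m n ℝ) :
    ‖X - Y‖ ^ 2 = trace (X * Xᵀ) - 2 * trace (X * Yᵀ) + trace (Y * Yᵀ) := by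
  have h : trace (Y * Xᵀ) = trace (X * Yᵀ) := by
    rw [← trace_transpose, transpose_mul, transpose_transpose]
  rw [frobenius_norm_sq_eq_trace]
  simp only [transpose_sub, Matrix.sub_mul, Matrix.mul_sub, trace_sub, h]
  ring

theorem norm_sub_sq_le_two_mul_trace_add (X Y : Matrix m n ℝ) :
    ‖X - Y‖ ^ 2 ≤ 2 * (trace (X * Xᵀ) + trace (Y * Yᵀ)) := by
  rw [← frobenius_norm_sq_eq_trace, ← frobenius_norm_sq_eq_trace]
  calc ‖X - Y‖ ^ 2 ≤ (‖X‖ + ‖Y‖) ^ 2 := by gcongr; exact norm_sub_le X Y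
    _ ≤ 2 * (‖X‖ ^ 2 + ‖Y‖ ^ 2) := add_sq_le

theorem trace_le_sqrt_card_mul_norm (X : Matrix n n ℝ) :
    trace X ≤ √(Fintype.card n) * ‖X‖ := by
  have hdiag : (trace X) ^ 2 ≤ Fintype.card n * ∑ i, X i i ^ 2 := by
    simpa [trace] using sq_sum_le_card_mul_sum_sq (s := Finset.univ) (f := fun i => X i i)
  have hoff : ∑ i, X i i ^ 2 ≤ ‖X‖ ^ 2 := by
    rw [frobenius_norm_sq_eq_trace]
    simp only [trace, diag, mul_apply, transpose_apply, ← sq]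
    exact Finset.sum_le_sum fun i _ =>
      Finset.single_le_sum (f := fun j => X i j ^ 2) (fun j _ => sq_nonneg _) (Finset.mem_univ i)
  calc trace X ≤ √((trace X) ^ 2) := Real.le_sqrt_of_sq_le le_rfl
    _ ≤ √(Fintype.card n * ‖X‖ ^ 2) := by gcongr; nlinarith
    _ = √(Fintype.card n) * ‖X‖ := by
      rw [Real.sqrt_mul (by positivity), Real.sqrt_sq (norm_nonneg _)]

variable [DecidableEq n]

theorem norm_mul_of_mul_transpose_eq_one (X : Matrix m n ℝ) {U : Matrix n n ℝ}
    (hU : U * Uᵀ = 1) : ‖X * U‖ = ‖X‖ := by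
  have h : ‖X * U‖ ^ 2 = ‖X‖ ^ 2 := by
    rw [frobenius_norm_sq_eq_trace, frobenius_norm_sq_eq_trace, transpose_mul,
      Matrix.mul_assoc, ← Matrix.mul_assoc U, hU, Matrix.one_mul]
  exact (pow_left_inj₀ (norm_nonneg _) (norm_nonneg _) two_ne_zero).mp h

theorem norm_sub_mul_le_of_mul_transpose_eq_one {U : Matrix n n ℝ} (hU : U * Uᵀ = 1)
    (a a₀ b b₀ : Matrix m n ℝ) : ‖a₀ - b₀ * U‖ ≤ ‖a - a₀‖ + ‖a - b * U‖ + ‖b - b₀‖ := by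
  have h : a₀ - b₀ * U = -(a - a₀) + (a - b * U) + (b - b₀) * U := by
    rw [Matrix.sub_mul]; abel
  rw [h, ← norm_neg (a - a₀), ← norm_mul_of_mul_transpose_eq_one (b - b₀) hU]
  exact norm_add₃_le

open scoped MatrixOrder in
theorem PosSemidef.norm_sqrt_add_smul_one_sub_sqrt_sq_le {S : Matrix n n ℝ} (hS : S.PosSemidef)
    {ε : ℝ} (hε : 0 ≤ ε) (hSε : (S + ε • (1 : Matrix n n ℝ)).PosSemidef) :
    ‖hSε.sqrt - hS.sqrt‖ ^ 2 ≤ Fintype.card n * ε := by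
  set g : ℝ → ℝ := fun t => √(t + ε) - √t
  have hshift : S + ε • (1 : Matrix n n ℝ) = cfc (fun t : ℝ => t + ε) S := by
    rw [cfc_add_const .., cfc_id' .., Algebra.algebraMap_eq_smul_one]
  have hdiff : hSε.sqrt - hS.sqrt = cfc g S := by
    rw [hSε.sqrt_eq_cfcSqrt, hS.sqrt_eq_cfcSqrt, CFC.sqrt_eq_real_sqrt _ hSε.nonneg,
      CFC.sqrt_eq_real_sqrt _ hS.nonneg, cfcₙ_eq_cfc, cfcₙ_eq_cfc, hshift, ← cfc_comp' ..,
      ← cfc_sub ..]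
  have hsq : cfc g S * cfc g S ≤ algebraMap ℝ _ ε := by
    rw [← cfc_mul ..]
    refine cfc_le_algebraMap _ _ _ fun t ht => ?_
    have ht0 : 0 ≤ t := spectrum_nonneg_of_nonneg hS.nonneg ht
    have ha := Real.sq_sqrt ht0
    have hb := Real.sq_sqrt (add_nonneg ht0 hε)
    have hab : √t ≤ √(t + ε) := Real.sqrt_le_sqrt (by linarith)
    -- `(√(t + ε) - √t)² ≤ (√(t + ε) - √t) (√(t + ε) + √t) = ε`
    nlinarith [Real.sqrt_nonneg t]
  have hT : (cfc g S)ᵀ = cfc g S := by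
    rw [← conjTranspose_eq_transpose_of_trivial]; exact (cfc_predicate g S).star_eq
  rw [hdiff, frobenius_norm_sq_eq_trace, hT]
  have h := (Matrix.le_iff.mp hsq).trace_nonneg
  rw [trace_sub, Algebra.algebraMap_eq_smul_one, trace_smul, trace_one, smul_eq_mul] at h
  linarith

theorem trace_one_sub_mul_add_le_norm_sub_sq {T : Matrix n n ℝ} (hT : T.PosDef)
    (X Y : Matrix n m ℝ) :
    trace ((1 - T) * (X * Xᵀ)) + trace ((1 - T⁻¹) * (Y * Yᵀ)) ≤ ‖X - Y‖ ^ 2 := by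
  have hTu : IsUnit T.det := (isUnit_iff_isUnit_det T).mp hT.isUnit
  have hTT : (T⁻¹)ᵀ = T⁻¹ := by
    rw [transpose_nonsing_inv, ← conjTranspose_eq_transpose_of_trivial, hT.1.eq]
  have h := (hT.posSemidef.conjTranspose_mul_mul_same (X - T⁻¹ * Y)).trace_nonneg
  simp only [conjTranspose_eq_transpose_of_trivial, transpose_sub, transpose_mul, hTT,
    Matrix.sub_mul, Matrix.mul_sub, trace_sub, Matrix.mul_assoc,
    nonsing_inv_mul_cancel_left T _ hTu, mul_nonsing_inv_cancel_left T _ hTu] at h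
  have hXX : trace (Xᵀ * (T * X)) = trace (T * (X * Xᵀ)) := by
    rw [trace_mul_comm, Matrix.mul_assoc]
  have hYY : trace (Yᵀ * (T⁻¹ * Y)) = trace (T⁻¹ * (Y * Yᵀ)) := by
    rw [trace_mul_comm, Matrix.mul_assoc]
  have hYX : trace (Yᵀ * X) = trace (X * Yᵀ) := trace_mul_comm _ _
  have hXY : trace (Xᵀ * Y) = trace (X * Yᵀ) := by
    rw [← trace_transpose, transpose_mul, transpose_transpose, hYX]
  rw [frobenius_norm_sub_sq]
  simp only [Matrix.sub_mul, Matrix.one_mul, trace_sub]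
  linarith

section Bures

variable {a b q : Matrix n n ℝ}

theorem PosDef.mul_mul_of_transpose_eq (hq : q.PosDef) (ha : IsUnit a.det) (haT : aᵀ = a) :
    (a * q * a).PosDef := by
  have h := hq.conjTranspose_mul_mul_same (B := a)
    (mulVec_injective_iff_isUnit.mpr ((isUnit_iff_isUnit_det _).mpr ha))
  rwa [conjTranspose_eq_transpose_of_trivial, haT] at h

theorem inv_mul_inv_mul_mul_transpose_eq_one (ha : IsUnit a.det) (hb : IsUnit b.det)
    (haT : aᵀ = a) (hbT : bᵀ = b) (hqT : qᵀ = q) (hq : q * q = a * (b * b) * a) :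
    (b⁻¹ * a⁻¹ * q) * (b⁻¹ * a⁻¹ * q)ᵀ = 1 := by
  rw [transpose_mul, transpose_mul, hqT, transpose_nonsing_inv, transpose_nonsing_inv, haT, hbT]
  calc b⁻¹ * a⁻¹ * q * (q * (a⁻¹ * b⁻¹)) = b⁻¹ * (a⁻¹ * (q * q) * a⁻¹) * b⁻¹ := by
        simp only [Matrix.mul_assoc]
    _ = 1 := by
        simp only [hq, Matrix.mul_assoc, nonsing_inv_mul_cancel_left a _ ha,
          mul_nonsing_inv _ ha, Matrix.mul_one, nonsing_inv_mul_cancel_left b _ hb,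
          mul_nonsing_inv _ hb]

theorem norm_sub_mul_inv_mul_inv_mul_sq (ha : IsUnit a.det) (hb : IsUnit b.det)
    (haT : aᵀ = a) (hqT : qᵀ = q) (hq : q * q = a * (b * b) * a) :
    ‖a - b * (b⁻¹ * a⁻¹ * q)‖ ^ 2 = trace (a * a) + trace (b * b) - 2 * trace q := by
  have hqa : (a⁻¹ * q)ᵀ = q * a⁻¹ := by
    rw [transpose_mul, hqT, transpose_nonsing_inv, haT]
  have hcross : trace (a * (q * a⁻¹)) = trace q := by
    rw [trace_mul_comm, Matrix.mul_assoc, nonsing_inv_mul _ ha, Matrix.mul_one]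
  have hsq : a⁻¹ * q * (q * a⁻¹) = b * b := by
    simp only [Matrix.mul_assoc, ← Matrix.mul_assoc q q, hq, nonsing_inv_mul_cancel_left a _ ha,
      mul_nonsing_inv _ ha, Matrix.mul_one]
  rw [Matrix.mul_assoc, mul_nonsing_inv_cancel_left b _ hb, frobenius_norm_sub_sq, hqa, haT,
    hcross, hsq]
  ring

theorem trace_inv_mul_mul_inv_mul_self (ha : IsUnit a.det) :
    trace (a⁻¹ * q * a⁻¹ * (a * a)) = trace q := by
  rw [Matrix.mul_assoc, nonsing_inv_mul_cancel_left a _ ha, trace_mul_comm,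
    mul_nonsing_inv_cancel_left a _ ha]

theorem trace_inv_inv_mul_mul_inv_mul_self (ha : IsUnit a.det) (hq' : IsUnit q.det)
    (hq : q * q = a * (b * b) * a) :
    trace ((a⁻¹ * q * a⁻¹)⁻¹ * (b * b)) = trace q := by
  have hinv : (a⁻¹ * q * a⁻¹)⁻¹ = a * q⁻¹ * a := by
    rw [Matrix.mul_inv_rev, Matrix.mul_inv_rev, nonsing_inv_nonsing_inv a ha, Matrix.mul_assoc]
  rw [hinv, trace_mul_comm, ← Matrix.mul_assoc, ← Matrix.mul_assoc, trace_mul_comm,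
    ← Matrix.mul_assoc, ← Matrix.mul_assoc, ← hq, mul_nonsing_inv_cancel_right q _ hq']

end Bures

end Matrix

section SecondMoment

variable {F : Type*} [MeasurableSpace F] {μ : Measure F} {m n : Type*} [Fintype m] [Fintype n]

def secondMoment (μ : Measure F) (σ : F → Matrix n m ℝ) : Matrix n n ℝ :=
  of fun i j => ∫ x, (σ x * (σ x)ᵀ) i j ∂μ

theorem integrable_trace_mul (W : Matrix m n ℝ) {g : F → Matrix n m ℝ}
    (hg : ∀ i j, Integrable (fun x => g x i j) μ) : Integrable (fun x => trace (W * g x)) μ := by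
  simp only [trace_mul_eq_sum]
  exact integrable_finsetSum _ fun i _ => integrable_finsetSum _ fun j _ => (hg j i).const_mul _

theorem integral_trace_mul (W : Matrix m n ℝ) {g : F → Matrix n m ℝ}
    (hg : ∀ i j, Integrable (fun x => g x i j) μ) :
    ∫ x, trace (W * g x) ∂μ = trace (W * of fun i j => ∫ x, g x i j ∂μ) := by
  simp only [trace_mul_eq_sum, of_apply]
  refine (integral_finsetSum _ fun i _ => integrable_finsetSum _ fun j _ =>
    (hg j i).const_mul _).trans (Finset.sum_congr rfl fun i _ => ?_)
  exact (integral_finsetSum _ fun j _ => (hg j i).const_mul _).trans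
    (Finset.sum_congr rfl fun j _ => integral_const_mul _ _)

variable [DecidableEq n] {σ₁ σ₂ : F → Matrix n m ℝ}

theorem integral_norm_sub_sq_le (h₁ : ∀ i j, Integrable (fun x => (σ₁ x * (σ₁ x)ᵀ) i j) μ)
    (h₂ : ∀ i j, Integrable (fun x => (σ₂ x * (σ₂ x)ᵀ) i j) μ)
    (hσ : Integrable (fun x => ‖σ₁ x - σ₂ x‖ ^ 2) μ) :
    ∫ x, ‖σ₁ x - σ₂ x‖ ^ 2 ∂μ ≤ 2 * trace (secondMoment μ σ₁ + secondMoment μ σ₂) := by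
  have hint := ((integrable_trace_mul 1 h₁).add (integrable_trace_mul 1 h₂)).const_mul 2
  calc ∫ x, ‖σ₁ x - σ₂ x‖ ^ 2 ∂μ
      ≤ ∫ x, 2 * (trace (1 * (σ₁ x * (σ₁ x)ᵀ)) + trace (1 * (σ₂ x * (σ₂ x)ᵀ))) ∂μ :=
        integral_mono hσ hint fun x => by
          simpa only [Matrix.one_mul] using norm_sub_sq_le_two_mul_trace_add (σ₁ x) (σ₂ x)
    _ = 2 * trace (secondMoment μ σ₁ + secondMoment μ σ₂) := by
        rw [integral_const_mul, integral_add (integrable_trace_mul 1 h₁)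
          (integrable_trace_mul 1 h₂), integral_trace_mul 1 h₁, integral_trace_mul 1 h₂,
          Matrix.one_mul, Matrix.one_mul, trace_add]
        rfl

theorem trace_one_sub_mul_secondMoment_add_le_integral {T : Matrix n n ℝ} (hT : T.PosDef)
    (h₁ : ∀ i j, Integrable (fun x => (σ₁ x * (σ₁ x)ᵀ) i j) μ)
    (h₂ : ∀ i j, Integrable (fun x => (σ₂ x * (σ₂ x)ᵀ) i j) μ)
    (hσ : Integrable (fun x => ‖σ₁ x - σ₂ x‖ ^ 2) μ) :
    trace ((1 - T) * secondMoment μ σ₁) + trace ((1 - T⁻¹) * secondMoment μ σ₂)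
      ≤ ∫ x, ‖σ₁ x - σ₂ x‖ ^ 2 ∂μ := by
  have hint := (integrable_trace_mul (1 - T) h₁).add (integrable_trace_mul (1 - T⁻¹) h₂)
  calc trace ((1 - T) * secondMoment μ σ₁) + trace ((1 - T⁻¹) * secondMoment μ σ₂)
      = ∫ x, trace ((1 - T) * (σ₁ x * (σ₁ x)ᵀ)) + trace ((1 - T⁻¹) * (σ₂ x * (σ₂ x)ᵀ)) ∂μ := by
        rw [integral_add (integrable_trace_mul _ h₁) (integrable_trace_mul _ h₂),
          integral_trace_mul _ h₁, integral_trace_mul _ h₂]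
        rfl
    _ ≤ ∫ x, ‖σ₁ x - σ₂ x‖ ^ 2 ∂μ :=
        integral_mono hint hσ fun x => trace_one_sub_mul_add_le_norm_sub_sq hT (σ₁ x) (σ₂ x)

end SecondMoment

namespace Matrix.PosDef

variable {n : Type*} [Fintype n] [DecidableEq n] {A B : Matrix n n ℝ}

theorem isUnit_det_sqrt (hA : A.PosDef) : IsUnit hA.posSemidef.sqrt.det :=
  (isUnit_iff_isUnit_det _).mp (hA.posSemidef.posDef_sqrt hA).isUnit

theorem mul_mul_sqrt (hA : A.PosDef) (hB : B.PosDef) :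
    (hA.posSemidef.sqrt * B * hA.posSemidef.sqrt).PosDef :=
  hB.mul_mul_of_transpose_eq hA.isUnit_det_sqrt hA.posSemidef.transpose_sqrt

/-- The rotation `U(A, B)` of the optimal Gaussian coupling. -/
def buresRotation (hA : A.PosDef) (hB : B.PosDef)
    (hP : (hA.posSemidef.sqrt * B * hA.posSemidef.sqrt).PosSemidef) : Matrix n n ℝ :=
  (hB.posSemidef.sqrt)⁻¹ * (hA.posSemidef.sqrt)⁻¹ * hP.sqrt

section

variable (hA : A.PosDef) (hB : B.PosDef)
  (hP : (hA.posSemidef.sqrt * B * hA.posSemidef.sqrt).PosSemidef)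

theorem sqrt_mul_sqrt_eq :
    hP.sqrt * hP.sqrt
      = hA.posSemidef.sqrt * (hB.posSemidef.sqrt * hB.posSemidef.sqrt) * hA.posSemidef.sqrt := by
  rw [hP.sqrt_mul_self, hB.posSemidef.sqrt_mul_self]

theorem buresRotation_mul_transpose :
    buresRotation hA hB hP * (buresRotation hA hB hP)ᵀ = 1 :=
  inv_mul_inv_mul_mul_transpose_eq_one hA.isUnit_det_sqrt hB.isUnit_det_sqrt
    hA.posSemidef.transpose_sqrt hB.posSemidef.transpose_sqrt hP.transpose_sqrt
    (sqrt_mul_sqrt_eq hA hB hP)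

theorem norm_sqrt_sub_sqrt_mul_buresRotation_sq :
    ‖hA.posSemidef.sqrt - hB.posSemidef.sqrt * buresRotation hA hB hP‖ ^ 2
      = trace A + trace B - 2 * trace hP.sqrt := by
  rw [buresRotation, norm_sub_mul_inv_mul_inv_mul_sq hA.isUnit_det_sqrt hB.isUnit_det_sqrt
    hA.posSemidef.transpose_sqrt hP.transpose_sqrt (sqrt_mul_sqrt_eq hA hB hP),
    hA.posSemidef.sqrt_mul_self, hB.posSemidef.sqrt_mul_self]

end

theorem norm_sqrt_sub_sqrt_mul_buresRotation_sq_le {F : Type*} [MeasurableSpace F]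
    {μ : Measure F} {m : Type*} [Fintype m] {σ₁ σ₂ : F → Matrix n m ℝ}
    (h₁ : ∀ i j, Integrable (fun x => (σ₁ x * (σ₁ x)ᵀ) i j) μ)
    (h₂ : ∀ i j, Integrable (fun x => (σ₂ x * (σ₂ x)ᵀ) i j) μ)
    (hσ : Integrable (fun x => ‖σ₁ x - σ₂ x‖ ^ 2) μ) {ε : ℝ} (hε : 0 ≤ ε)
    (hA : (secondMoment μ σ₁ + ε • (1 : Matrix n n ℝ)).PosDef)
    (hB : (secondMoment μ σ₂ + ε • (1 : Matrix n n ℝ)).PosDef)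
    (hP : (hA.posSemidef.sqrt * (secondMoment μ σ₂ + ε • (1 : Matrix n n ℝ)) *
      hA.posSemidef.sqrt).PosSemidef) :
    ‖hA.posSemidef.sqrt - hB.posSemidef.sqrt * buresRotation hA hB hP‖ ^ 2
      ≤ ∫ x, ‖σ₁ x - σ₂ x‖ ^ 2 ∂μ + 2 * Fintype.card n * ε := by
  set a := hA.posSemidef.sqrt
  have ha := hA.isUnit_det_sqrt
  have hq : hP.sqrt.PosDef := hP.posDef_sqrt (mul_mul_sqrt hA hB)
  -- `T = a⁻¹ q a⁻¹`, `q = hP.sqrt`, is the dual witness: `tr (T A) = tr (T⁻¹ B) = tr q`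
  have hT : (a⁻¹ * hP.sqrt * a⁻¹).PosDef := hq.mul_mul_of_transpose_eq
    (isUnit_nonsing_inv_det a ha) (by rw [transpose_nonsing_inv, hA.posSemidef.transpose_sqrt])
  have hTA := trace_inv_mul_mul_inv_mul_self (q := hP.sqrt) ha
  have hTB := trace_inv_inv_mul_mul_inv_mul_self ha
    ((isUnit_iff_isUnit_det _).mp hq.isUnit) (sqrt_mul_sqrt_eq hA hB hP)
  rw [hA.posSemidef.sqrt_mul_self] at hTA
  rw [hB.posSemidef.sqrt_mul_self] at hTB
  have hdual := trace_one_sub_mul_secondMoment_add_le_integral hT h₁ h₂ hσ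
  have hT0 := hT.posSemidef.trace_nonneg
  have hT0' := hT.inv.posSemidef.trace_nonneg
  rw [norm_sqrt_sub_sqrt_mul_buresRotation_sq]
  simp only [Matrix.sub_mul, Matrix.one_mul, Matrix.mul_add, Matrix.mul_smul, Matrix.mul_one,
    trace_sub, trace_add, trace_smul, trace_one, smul_eq_mul] at hTA hTB hdual ⊢
  nlinarith [mul_nonneg hε hT0, mul_nonneg hε hT0']

end Matrix.PosDef

theorem sq_le_of_le_add_add {z p r p' ε I N : ℝ} (hε : 0 ≤ ε) (hε1 : ε ≤ 1) (hI : 0 ≤ I)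
    (hIN : I ≤ 4 * N) (hp : 0 ≤ p) (hr : 0 ≤ r) (hz0 : 0 ≤ z) (hz : z ≤ p + r + p')
    (hp2 : p ^ 2 ≤ 3 * ε) (hr2 : r ^ 2 ≤ I + 6 * ε) (hp'2 : p' ^ 2 ≤ 3 * ε) :
    z ^ 2 ≤ 50 * √ε * (1 + √N) + I := by
  set s := √ε
  set t := √N
  have hs0 : 0 ≤ s := Real.sqrt_nonneg ε
  have ht0 : 0 ≤ t := Real.sqrt_nonneg N
  have hs2 : s ^ 2 = ε := Real.sq_sqrt hε
  have ht2 : t ^ 2 = N := Real.sq_sqrt (by linarith)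
  have hs1 : s ≤ 1 := Real.sqrt_le_one.mpr hε1
  have hp_le : p ≤ 2 * s := by nlinarith
  have hp'_le : p' ≤ 2 * s := by nlinarith
  have hr_le : r ≤ 2 * t + 3 * s := by nlinarith
  calc z ^ 2 ≤ (4 * s + r) ^ 2 := by gcongr; linarith
    _ ≤ 46 * s ^ 2 + 16 * s * t + I := by nlinarith
    _ ≤ 50 * s * (1 + t) + I := by nlinarith

theorem frobSq_eq_norm_sq (A : M3) : frobSq A = ‖A‖ ^ 2 :=
  (Matrix.frobenius_norm_sq_eq_trace A).symm

theorem frobNorm_eq_norm (A : M3) : frobNorm A = ‖A‖ := by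
  rw [frobNorm, frobSq_eq_norm_sq, Real.sqrt_sq (norm_nonneg A)]

theorem gaussian_coupling_regularized :
    ∃ C : ℝ, 0 < C ∧
    ∀ {F : Type} [MeasurableSpace F] (m : Measure F), IsProbabilityMeasure m →
    ∀ (σ₁ σ₂ : F → M3),
      (∀ i j, Integrable (fun x => (σ₁ x * (σ₁ x)ᵀ) i j) m) →
      (∀ i j, Integrable (fun x => (σ₂ x * (σ₂ x)ᵀ) i j) m) →
      Integrable (fun x => frobSq (σ₁ x - σ₂ x)) m →
    ∀ (S1 S2 : M3),
      S1 = Matrix.of (fun i j => ∫ x, (σ₁ x * (σ₁ x)ᵀ) i j ∂m) →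
      S2 = Matrix.of (fun i j => ∫ x, (σ₂ x * (σ₂ x)ᵀ) i j ∂m) →
    ∀ (hS1 : S1.PosSemidef) (hS2 : S2.PosSemidef)
      (ε : ℝ), ε ∈ Set.Ioo (0:ℝ) 1 →
    ∀ (hA : (S1 + ε • (1 : M3)).PosDef) (hB : (S2 + ε • (1 : M3)).PosDef)
      (hP : (hA.posSemidef.sqrt * (S2 + ε • (1 : M3)) * hA.posSemidef.sqrt).PosSemidef)
      (Uε : M3),
      Uε = (hB.posSemidef.sqrt)⁻¹ * (hA.posSemidef.sqrt)⁻¹ * hP.sqrt →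
      frobSq (hS1.sqrt - hS2.sqrt * Uε)
        ≤ C * Real.sqrt ε * (1 + Real.sqrt (frobNorm (S1 + S2)))
          + ∫ x, frobSq (σ₁ x - σ₂ x) ∂m := by
  refine ⟨50, by norm_num, ?_⟩
  intro F _ m _ σ₁ σ₂ h₁ h₂ hσ S1 S2 hS1e hS2e hS1 hS2 ε ⟨hε0, hε1⟩ hA hB hP Uε hUε
  obtain rfl : S1 = secondMoment m σ₁ := hS1e
  obtain rfl : S2 = secondMoment m σ₂ := hS2e
  obtain rfl : Uε = Matrix.PosDef.buresRotation hA hB hP := hUε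
  simp only [frobSq_eq_norm_sq, frobNorm_eq_norm] at hσ ⊢
  have hcoupling :=
    Matrix.PosDef.norm_sqrt_sub_sqrt_mul_buresRotation_sq_le h₁ h₂ hσ hε0.le hA hB hP
  have hpert₁ := hS1.norm_sqrt_add_smul_one_sub_sqrt_sq_le hε0.le hA.posSemidef
  have hpert₂ := hS2.norm_sqrt_add_smul_one_sub_sqrt_sq_le hε0.le hB.posSemidef
  have htri := Matrix.norm_sub_mul_le_of_mul_transpose_eq_one
    (Matrix.PosDef.buresRotation_mul_transpose hA hB hP) hA.posSemidef.sqrt hS1.sqrt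
    hB.posSemidef.sqrt hS2.sqrt
  have hIN : ∫ x, ‖σ₁ x - σ₂ x‖ ^ 2 ∂m ≤ 4 * ‖secondMoment m σ₁ + secondMoment m σ₂‖ := by
    have htr := Matrix.trace_le_sqrt_card_mul_norm (secondMoment m σ₁ + secondMoment m σ₂)
    have h3 : √(3 : ℝ) ≤ 2 := by rw [Real.sqrt_le_left (by norm_num)]; norm_num
    rw [Fintype.card_fin, Nat.cast_ofNat] at htr
    nlinarith [integral_norm_sub_sq_le h₁ h₂ hσ, norm_nonneg (secondMoment m σ₁ + secondMoment m σ₂)]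
  simp only [Fintype.card_fin, Nat.cast_ofNat] at hpert₁ hpert₂ hcoupling
  exact sq_le_of_le_add_add hε0.le hε1.le (integral_nonneg fun x => sq_nonneg _) hIN
    (norm_nonneg _) (norm_nonneg _) (norm_nonneg _) htri hpert₁ (by linarith) hpert₂
end
end
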